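/- arXiv:2402.03306 — 3 statements merged into one kernel-verified Lean document; each statement's English description precedes it below -/
import Mathlib

section
/- If F : (Fin n → Bool) → (Fin n → Bool) satisfies F(¬x) = ¬(F x) for all x, and F decides (every configuration eventually reaches a constant configuration that is a fixed point of F), then F' = ¬ ∘ F synchronises: every configuration eventually reaches the 2-cycle alternating between the all-zeros and all-ones configurations. -/
/-- If `F` commutes with pointwise negation and decides (every configuration eventually
reaches a constant configuration that is a fixed point of `F`), then `F' = ¬ ∘ F`
synchronises: every configuration eventually stays constant and thereafter `F'` negates it. -/
theorem stmt1 (n : ℕ) (F : (Fin n → Bool) → (Fin n → Bool))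
    (hneg : ∀ x : Fin n → Bool, F (fun i => !(x i)) = fun i => !(F x i))
    (hdec : ∀ x : Fin n → Bool, ∃ t₀ : ℕ, ∀ t ≥ t₀, ∃ b : Bool,
      F^[t] x = (fun _ => b) ∧ F (fun _ => b) = (fun _ => b))
    (F' : (Fin n → Bool) → (Fin n → Bool))
    (hF' : F' = fun x => fun i => !(F x i)) :
    ∀ x : Fin n → Bool, ∃ t₀ : ℕ, ∀ t ≥ t₀,
      (∃ b : Bool, F'^[t] x = fun _ => b) ∧
      F' (F'^[t] x) = fun i => !(F'^[t] x i) := by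
  subst hF'
  -- Each iterate of F' is F's iterate or its pointwise negation
  have key : ∀ (t : ℕ) (x : Fin n → Bool),
      (fun x => fun i => !(F x i))^[t] x = F^[t] x ∨
      (fun x => fun i => !(F x i))^[t] x = fun i => !(F^[t] x i) := by
    intro t
    induction t with
    | zero => intro x; left; rfl
    | succ t ih =>
      intro x
      rcases ih x with h | h
      · right
        rw [Function.iterate_succ_apply', Function.iterate_succ_apply', h]
      · left
        rw [Function.iterate_succ_apply', Function.iterate_succ_apply', h]
        simp only [hneg]
        funext i; simp
  intro x
  obtain ⟨t₀, ht₀⟩ := hdec x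
  refine ⟨t₀, fun t ht => ?_⟩
  obtain ⟨b, hb, hfix⟩ := ht₀ t ht
  have hfix' : F (fun _ => !b) = fun _ => !b := by
    have := hneg (fun _ => b)
    rw [hfix] at this
    simpa using this
  rcases key t x with h | h
  · rw [h, hb]
    refine ⟨⟨b, rfl⟩, ?_⟩
    simp only [hfix]
  · rw [h, hb]
    refine ⟨⟨!b, rfl⟩, ?_⟩
    simp only [hfix']
end

section
/- If an automata network F : (Fin n → ZMod k) → (Fin n → ZMod k) decides k-parity (every configuration converges to the constant configuration whose value is the sum of its entries in ZMod k), and k ≥ 2 and n ≥ 1, then k does not divide n. -/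
/-- If `F` decides `k`-parity (every configuration converges to the constant
configuration valued at the sum of its entries in `ZMod k`), `k ≥ 2` and `n ≥ 1`,
then `k` does not divide `n`. -/
theorem stmt3 (n k : ℕ) (hk : 2 ≤ k) (hn : 1 ≤ n)
    (F : (Fin n → ZMod k) → (Fin n → ZMod k))
    (hdec : ∀ x : Fin n → ZMod k, ∃ t₀ : ℕ, ∀ t ≥ t₀,
      F^[t] x = fun _ => ∑ i, x i) :
    ¬ (k ∣ n) := by
  intro hdvd
  haveI : Fact (1 < k) := ⟨hk⟩
  haveI : NeZero n := ⟨by omega⟩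
  -- configuration with sum 1
  set y : Fin n → ZMod k := fun i => if i = 0 then 1 else 0 with hy
  have hsum : ∑ i, y i = 1 := by simp [hy]
  obtain ⟨t₀, ht₀⟩ := hdec y
  have h1 : F^[t₀] y = fun _ => (1 : ZMod k) := by rw [ht₀ t₀ le_rfl, hsum]
  have h2 : F^[t₀ + 1] y = fun _ => (1 : ZMod k) := by
    rw [ht₀ (t₀ + 1) (by omega), hsum]
  have hfix : F (fun _ => (1 : ZMod k)) = fun _ => (1 : ZMod k) := by
    have h := Function.iterate_succ_apply' F t₀ y
    rw [h2, h1] at h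
    exact h.symm
  have hiter : ∀ t, F^[t] (fun _ => (1 : ZMod k)) = fun _ => (1 : ZMod k) := by
    intro t
    induction t with
    | zero => rfl
    | succ t ih => rw [Function.iterate_succ_apply' F t, ih, hfix]
  obtain ⟨t₁, ht₁⟩ := hdec (fun _ => (1 : ZMod k))
  have h3 := ht₁ t₁ le_rfl
  rw [hiter t₁] at h3
  have h4 : (1 : ZMod k) = n := by
    have := congrFun h3 0
    simpa using this
  have h5 : (n : ZMod k) = 0 := by
    exact_mod_cast (ZMod.natCast_eq_zero_iff n k).2 hdvd
  rw [h5] at h4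
  exact one_ne_zero h4
end

section
/- Let F : (Fin n → ZMod k) → (Fin n → ZMod k) decide k-parity and satisfy F(x + 1) = F(x) + 1 (coordinatewise shift invariance). Then F' = (+1) ∘ F solves the k-synchronisation problem: for every x, there exists t₀ such that for all t ≥ t₀, (F')^t(x) is a constant configuration, and F' maps the constant configuration s^n to the constant configuration (s + n·c)^n passing through all k constant configurations cyclically; in particular, (F')^k restricted to the limit set is the identity on constant configurations when each constant configuration is a fixed point of F. -/
/-- If `F` decides `k`-parity (constant configurations are fixed points and every
configuration converges to the constant configuration valued at the mod-`k` sum of its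
entries) and is shift invariant, then `F' = (+1) ∘ F` solves the `k`-synchronisation
problem: every configuration eventually stays constant, each `F'`-step adds `1` to the
constant value (so `F'` cycles through all `k` constant configurations), and `(F')^k`
is the identity on constant configurations. -/
theorem stmt17 (n k : ℕ) (hk : 1 ≤ k)
    (F : (Fin n → ZMod k) → (Fin n → ZMod k))
    (hfix : ∀ s : ZMod k, F (fun _ => s) = fun _ => s)
    (hconv : ∀ x : Fin n → ZMod k, ∃ t₀ : ℕ, ∀ t ≥ t₀, F^[t] x = fun _ => ∑ i, x i)
    (hshift : ∀ x : Fin n → ZMod k, F (fun i => x i + 1) = fun i => F x i + 1)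
    (F' : (Fin n → ZMod k) → (Fin n → ZMod k))
    (hF' : F' = fun x => fun i => F x i + 1) :
    (∀ x : Fin n → ZMod k, ∃ t₀ : ℕ, ∀ t ≥ t₀, ∃ s : ZMod k, F'^[t] x = fun _ => s) ∧
    (∀ s : ZMod k, F' (fun _ => s) = fun _ => s + 1) ∧
    (∀ s : ZMod k, F'^[k] (fun _ => s) = fun _ => s) := by
  have hshiftc : ∀ (c : ZMod k) (x : Fin n → ZMod k),
      F (fun i => x i + c) = fun i => F x i + c := by
    have : NeZero k := ⟨by omega⟩
    intro c
    obtain ⟨m, rfl⟩ := ZMod.natCast_rightInverse.surjective c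
    induction m with
    | zero => intro x; simp
    | succ m ih =>
      intro x
      push_cast
      have h1 := hshift (fun i => x i + (m : ZMod k))
      calc F (fun i => x i + ((m : ZMod k) + 1))
          = F (fun i => (x i + (m : ZMod k)) + 1) := by
            simp only [add_assoc]
        _ = fun i => F (fun j => x j + (m : ZMod k)) i + 1 := h1
        _ = fun i => F x i + ((m : ZMod k) + 1) := by
            funext i; rw [ih x]; ring
  have key : ∀ (t : ℕ) (x : Fin n → ZMod k),
      F'^[t] x = fun i => F^[t] x i + (t : ZMod k) := by
    intro t
    induction t with
    | zero => intro x; simp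
    | succ t ih =>
      intro x
      rw [Function.iterate_succ_apply', ih x, hF']
      simp only
      rw [hshiftc (t : ZMod k) (F^[t] x)]
      funext i
      rw [Function.iterate_succ_apply']
      push_cast
      ring
  refine ⟨?_, ?_, ?_⟩
  · intro x
    obtain ⟨t₀, ht₀⟩ := hconv x
    exact ⟨t₀, fun t ht => ⟨(∑ i, x i) + (t : ZMod k), by
      rw [key t x, ht₀ t ht]⟩⟩
  · intro s
    rw [hF']
    simp only
    rw [hfix s]
  · intro s
    rw [key k (fun _ => s)]
    have : F^[k] (fun _ => s) = fun _ => s := by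
      apply Function.iterate_fixed
      exact hfix s
    rw [this]
    funext i
    simp [ZMod.natCast_self]
end
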